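/- arXiv:1407.7509 — 6 statements merged into one kernel-verified Lean document; each statement's English description precedes it below -/
import Mathlib

section
/- Let R be a ring and I a nil ideal of R. Then R is nil-clean if and only if R/I is nil-clean. -/
/-- A ring is nil-clean if every element is the sum of an idempotent and a nilpotent. -/
def IsNilCleanRing (R : Type*) [Ring R] : Prop :=
  ∀ a : R, ∃ e q : R, IsIdempotentElem e ∧ IsNilpotent q ∧ a = e + q

/-!
Nil-cleanness passes to every quotient. Conversely, when `I` is nil, idempotents of `R ⧸ I` lift
to idempotents of `R`, and an element whose image is nilpotent is itself nilpotent, so a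
decomposition `a + I = e + q` in `R ⧸ I` lifts to `a = e' + (a - e')` with `e'` an idempotent lift
of `e`.
-/

section

variable {R S : Type*} [Ring R] [Ring S]

theorem IsNilpotent.of_map_of_ker_isNilpotent (f : R →+* S)
    (hker : ∀ x ∈ RingHom.ker f, IsNilpotent x) {x : R} (hx : IsNilpotent (f x)) :
    IsNilpotent x := by
  obtain ⟨n, hn⟩ := hx
  obtain ⟨m, hm⟩ := hker (x ^ n) (by rwa [RingHom.mem_ker, map_pow])
  exact ⟨n * m, by rw [pow_mul, hm]⟩

theorem IsNilCleanRing.of_surjective (f : R →+* S) (hf : Function.Surjective f)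
    (h : IsNilCleanRing R) : IsNilCleanRing S := by
  intro a
  obtain ⟨r, rfl⟩ := hf a
  obtain ⟨e, q, he, hq, rfl⟩ := h r
  exact ⟨f e, f q, he.map f, hq.map f, map_add f e q⟩

theorem IsNilCleanRing.of_surjective_of_ker_isNilpotent (f : R →+* S) (hf : Function.Surjective f)
    (hker : ∀ x ∈ RingHom.ker f, IsNilpotent x) (h : IsNilCleanRing S) : IsNilCleanRing R := by
  intro a
  obtain ⟨e, q, he, hq, hsum⟩ := h (f a)
  obtain ⟨e', he', rfl⟩ := exists_isIdempotentElem_eq_of_ker_isNilpotent f hker e (hf e) he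
  refine ⟨e', a - e', he', IsNilpotent.of_map_of_ker_isNilpotent f hker ?_, by abel⟩
  rwa [map_sub, hsum, add_sub_cancel_left]

end

theorem stmt0 (R : Type*) [Ring R] (I : TwoSidedIdeal R)
    (hnil : ∀ a ∈ I, IsNilpotent a) :
    IsNilCleanRing R ↔ IsNilCleanRing I.ringCon.Quotient := by
  have hker : ∀ x ∈ RingHom.ker I.ringCon.mk', IsNilpotent x := fun x hx ↦
    hnil x (by rwa [← TwoSidedIdeal.ker_ringCon_mk' I, TwoSidedIdeal.mem_ker, ← RingHom.mem_ker])
  exact ⟨.of_surjective _ I.ringCon.mk'_surjective,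
    .of_surjective_of_ker_isNilpotent _ I.ringCon.mk'_surjective hker⟩
end

section
/- Let R be an abelian exchange ring and x ∈ R. Then the two-sided ideal generated by x equals R (i.e., RxR = R) if and only if x is a unit of R. -/
/-- A ring is abelian if every idempotent is central. -/
def IsAbelianRing (R : Type*) [Ring R] : Prop :=
  ∀ e : R, IsIdempotentElem e → ∀ r : R, e * r = r * e


/-- A ring is exchange if for every `a` there is an idempotent `e ∈ aR` with `1 - e ∈ (1-a)R`. -/
def IsExchangeRing (R : Type*) [Ring R] : Prop :=
  ∀ a : R, ∃ e r s : R, IsIdempotentElem e ∧ e = a * r ∧ 1 - e = (1 - a) * s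

/-- In an abelian ring, a right-invertible element is a unit. -/
lemma isUnit_of_mul_eq_one_abelian {R : Type*} [Ring R] (hab : IsAbelianRing R)
    (x r : R) (hr : x * r = 1) : IsUnit x := by
  have he : IsIdempotentElem (r * x) := by
    unfold IsIdempotentElem
    calc r * x * (r * x) = r * (x * r) * x := by noncomm_ring
    _ = r * x := by rw [hr]; noncomm_ring
  have hc := hab _ he x
  have h0 : (1 - r * x) * x = 0 := by
    have : x * (r * x) = x := by
      calc x * (r * x) = (x * r) * x := by noncomm_ring
      _ = x := by rw [hr]; noncomm_ring
    calc (1 - r * x) * x = x - (r * x) * x := by noncomm_ring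
    _ = x - x * (r * x) := by rw [hc]
    _ = 0 := by rw [this]; abel
  have h1 : r * x = 1 := by
    have : 1 - r * x = ((1 - r * x) * x) * r := by
      calc 1 - r * x = (1 - r * x) * (x * r) := by rw [hr]; noncomm_ring
      _ = ((1 - r * x) * x) * r := by noncomm_ring
    rw [h0, zero_mul] at this
    rw [sub_eq_zero] at this
    exact this.symm
  exact ⟨⟨x, r, hr, h1⟩, rfl⟩

theorem stmt1 (R : Type*) [Ring R] (hab : IsAbelianRing R) (hex : IsExchangeRing R)
    (x : R) : TwoSidedIdeal.span {x} = (⊤ : TwoSidedIdeal R) ↔ IsUnit x := by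
  constructor
  · intro h
    -- work with the right ideal generated by x, as a left ideal of Rᵐᵒᵖ
    set I : Ideal Rᵐᵒᵖ := Ideal.span {MulOpposite.op x} with hI
    by_cases hIt : I = ⊤
    · -- x is right invertible
      have h1 : (1 : Rᵐᵒᵖ) ∈ I := hIt ▸ trivial
      rw [hI, Ideal.mem_span_singleton'] at h1
      obtain ⟨a, ha⟩ := h1
      have : x * a.unop = 1 := by
        have := congrArg MulOpposite.unop ha
        simpa using this
      exact isUnit_of_mul_eq_one_abelian hab x a.unop this
    · obtain ⟨M, hM, hIM⟩ := Ideal.exists_le_maximal I hIt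
      -- key claim : M is closed under right multiplication in Rᵐᵒᵖ,
      -- i.e. the corresponding right ideal of R is a left ideal.
      have key : ∀ a r : R, MulOpposite.op a ∈ M → MulOpposite.op (r * a) ∈ M := by
        intro a r haM
        by_contra hra
        -- M ⊔ span {op (r*a)} = ⊤
        have hlt : M < M ⊔ Ideal.span {MulOpposite.op (r * a)} := by
          refine lt_of_le_of_ne le_sup_left (fun hEq => hra ?_)
          rw [hEq]
          exact Submodule.mem_sup_right (Ideal.subset_span rfl)
        have htop : M ⊔ Ideal.span {MulOpposite.op (r * a)} = ⊤ := hM.1.2 _ hlt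
        have h1 : (1 : Rᵐᵒᵖ) ∈ M ⊔ Ideal.span {MulOpposite.op (r * a)} := htop ▸ trivial
        rw [Submodule.mem_sup] at h1
        obtain ⟨m, hm, z, hz, hmz⟩ := h1
        rw [Ideal.mem_span_singleton'] at hz
        obtain ⟨bb, hb⟩ := hz
        -- so 1 = m₀ + r * a * b  in R, with op m₀ ∈ M
        set b := bb.unop with hbdef
        have hz' : z.unop = r * a * b := by
          rw [← hb]
          simp [hbdef, MulOpposite.unop_mul, mul_assoc]
        have hone : (1 : R) = m.unop + r * a * b := by
          have := congrArg MulOpposite.unop hmz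
          simp only [MulOpposite.unop_one, MulOpposite.unop_add, hz'] at this
          exact this.symm
        set c : R := a * b with hc
        have hcM : MulOpposite.op c ∈ M := by
          have : MulOpposite.op c = MulOpposite.op b * MulOpposite.op a := by
            simp [hc]
          rw [this]
          exact M.smul_mem _ haM
        have honem : MulOpposite.op (1 - r * c) ∈ M := by
          have : (1 : R) - r * c = m.unop := by rw [hone, hc]; noncomm_ring
          rw [this]
          simpa using hm
        -- apply exchange to c * r
        obtain ⟨e, d, s, he, h1e, h2e⟩ := hex (c * r)
        have hcent := hab e he
        have heM : MulOpposite.op e ∈ M := by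
          have : MulOpposite.op e = MulOpposite.op (r * d) * MulOpposite.op c := by
            rw [h1e]; simp [mul_assoc]
          rw [this]
          exact M.smul_mem _ hcM
        have hterm1 : MulOpposite.op (r * (1 - e) * c) ∈ M := by
          have : r * (1 - e) * c = (1 - r * c) * (r * s * c) := by
            rw [h2e]; noncomm_ring
          rw [this]
          have : MulOpposite.op ((1 - r * c) * (r * s * c))
              = MulOpposite.op (r * s * c) * MulOpposite.op (1 - r * c) := by simp
          rw [this]
          exact M.smul_mem _ honem
        have hterm2 : MulOpposite.op (r * e * c) ∈ M := by
          have : r * e * c = e * (r * c) := by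
            rw [← hcent]; noncomm_ring
          rw [this]
          have : MulOpposite.op (e * (r * c))
              = MulOpposite.op (r * c) * MulOpposite.op e := by simp
          rw [this]
          exact M.smul_mem _ heM
        have hrcM : MulOpposite.op (r * c) ∈ M := by
          have : MulOpposite.op (r * c)
              = MulOpposite.op (r * (1 - e) * c) + MulOpposite.op (r * e * c) := by
            rw [← MulOpposite.op_add]
            congr 1
            noncomm_ring
          rw [this]
          exact M.add_mem hterm1 hterm2
        have h1M : (1 : Rᵐᵒᵖ) ∈ M := by
          have : (1 : Rᵐᵒᵖ) = MulOpposite.op (1 - r * c) + MulOpposite.op (r * c) := by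
            rw [← MulOpposite.op_add]
            simp
          rw [this]
          exact M.add_mem honem hrcM
        exact hM.1.1 (Ideal.eq_top_of_isUnit_mem M h1M isUnit_one)
      -- build the two-sided ideal from M
      let T : TwoSidedIdeal R := TwoSidedIdeal.mk' {a | MulOpposite.op a ∈ M}
        (by simp)
        (fun {u v} hu hv => by
          simpa using M.add_mem hu hv)
        (fun {u} hu => by
          simpa using M.neg_mem hu)
        (fun {u v} hv => key v u hv)
        (fun {u v} hu => by
          have : MulOpposite.op (u * v) = MulOpposite.op v * MulOpposite.op u := by simp
          simpa [this] using M.smul_mem (MulOpposite.op v) hu)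
      have hxT : x ∈ T := by
        rw [TwoSidedIdeal.mem_mk']
        exact hIM (Ideal.subset_span rfl)
      have h1T : (1 : R) ∈ T := by
        have h1span : (1 : R) ∈ TwoSidedIdeal.span {x} := h ▸ trivial
        exact TwoSidedIdeal.mem_span_iff.mp h1span T (by simpa using hxT)
      rw [TwoSidedIdeal.mem_mk'] at h1T
      exact absurd (Ideal.eq_top_of_isUnit_mem M (by simpa using h1T) isUnit_one) hM.1.1
  · intro hx
    obtain ⟨u, rfl⟩ := hx
    apply TwoSidedIdeal.eq_top
    have : ((u : R) : R) ∈ TwoSidedIdeal.span {(u : R)} :=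
      TwoSidedIdeal.subset_span rfl
    have := (TwoSidedIdeal.span {(u : R)}).mul_mem_left (↑u⁻¹) _ this
    simpa using this
end

section
/- Let R be an abelian exchange ring. Then the intersection of all maximal two-sided ideals of R equals the Jacobson radical J(R). -/
/-- Every proper two-sided ideal is contained in a maximal (coatom) two-sided ideal. -/
lemma exists_coatom_ge' {R : Type*} [Ring R] (I : TwoSidedIdeal R) (hI : (1 : R) ∉ I) :
    ∃ M : TwoSidedIdeal R, IsCoatom M ∧ I ≤ M := by
  have hchain : ∀ c ⊆ {J : TwoSidedIdeal R | (1 : R) ∉ J}, IsChain (· ≤ ·) c →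
      ∀ y ∈ c, ∃ ub ∈ {J : TwoSidedIdeal R | (1 : R) ∉ J}, ∀ z ∈ c, z ≤ ub := by
    intro c hcS hc y hy
    refine ⟨TwoSidedIdeal.mk' (⋃ J ∈ c, (J : Set R)) ?_ ?_ ?_ ?_ ?_, ?_, ?_⟩
    · exact Set.mem_biUnion hy (TwoSidedIdeal.zero_mem y)
    · rintro a b ha hb
      simp only [Set.mem_iUnion, SetLike.mem_coe] at ha hb ⊢
      obtain ⟨J1, hJ1, ha⟩ := ha
      obtain ⟨J2, hJ2, hb⟩ := hb
      rcases hc.total hJ1 hJ2 with h | h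
      · exact ⟨J2, hJ2, J2.add_mem (h ha) hb⟩
      · exact ⟨J1, hJ1, J1.add_mem ha (h hb)⟩
    · rintro a ha
      simp only [Set.mem_iUnion, SetLike.mem_coe] at ha ⊢
      obtain ⟨J, hJ, ha⟩ := ha
      exact ⟨J, hJ, J.neg_mem ha⟩
    · rintro x a ha
      simp only [Set.mem_iUnion, SetLike.mem_coe] at ha ⊢
      obtain ⟨J, hJ, ha⟩ := ha
      exact ⟨J, hJ, J.mul_mem_left _ _ ha⟩
    · rintro a x ha
      simp only [Set.mem_iUnion, SetLike.mem_coe] at ha ⊢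
      obtain ⟨J, hJ, ha⟩ := ha
      exact ⟨J, hJ, J.mul_mem_right _ _ ha⟩
    · intro h1
      rw [TwoSidedIdeal.mem_mk'] at h1
      simp only [Set.mem_iUnion, SetLike.mem_coe] at h1
      obtain ⟨J, hJ, h1⟩ := h1
      exact hcS hJ h1
    · intro z hz x hx
      rw [TwoSidedIdeal.mem_mk']
      exact Set.mem_biUnion hz hx
  obtain ⟨m, him, hm⟩ := zorn_le_nonempty₀ _ hchain I hI
  refine ⟨m, ⟨?_, ?_⟩, him⟩
  · intro h
    exact hm.prop (h ▸ trivial)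
  · intro b hb
    by_contra hbt
    have h1 : (1 : R) ∉ b := fun h1 => hbt (TwoSidedIdeal.eq_top _ h1)
    have h2 : b ≤ m := hm.2 h1 hb.le
    exact hb.not_ge h2

/-- Abelian rings are Dedekind-finite. -/
lemma abelian_dedekind {R : Type*} [Ring R] (hab : IsAbelianRing R) {u v : R}
    (h : u * v = 1) : v * u = 1 := by
  have he : IsIdempotentElem (v * u) := by
    unfold IsIdempotentElem
    rw [mul_assoc, ← mul_assoc u, h, one_mul]
  have hu : u * (v * u) = u := by rw [← mul_assoc, h, one_mul]
  have h4 : (v * u) * u = u := (hab _ he u).trans hu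
  calc v * u = (v * u) * (u * v) := by rw [h, mul_one]
    _ = ((v * u) * u) * v := by rw [← mul_assoc]
    _ = u * v := by rw [h4]
    _ = 1 := h

theorem stmt2 (R : Type*) [Ring R] (hab : IsAbelianRing R) (hex : IsExchangeRing R) :
    sInf {M : TwoSidedIdeal R | IsCoatom M} =
      TwoSidedIdeal.jacobson (⊥ : TwoSidedIdeal R) := by
  apply le_antisymm
  · -- sInf of coatoms ≤ jacobson ⊥
    intro x hx
    rw [TwoSidedIdeal.mem_jacobson_iff]
    intro y
    obtain ⟨e, r, s, he, her, hes⟩ := hex (-(y * x))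
    have hcomm : ∀ z : R, z * (1 - e) = (1 - e) * z := fun z => by
      rw [mul_sub, sub_mul, mul_one, one_mul, hab e he z]
    have he0 : e = 0 := by
      by_contra hne
      have h1I : (1 : R) ∉ TwoSidedIdeal.mk' {t : R | ∃ u, t = (1 - e) * u}
          ⟨0, (mul_zero _).symm⟩
          (by rintro a b ⟨u1, rfl⟩ ⟨u2, rfl⟩; exact ⟨u1 + u2, (mul_add _ _ _).symm⟩)
          (by rintro a ⟨u, rfl⟩; exact ⟨-u, (mul_neg _ _).symm⟩)
          (by rintro z a ⟨u, rfl⟩; exact ⟨z * u, by rw [← mul_assoc, hcomm z, mul_assoc]⟩)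
          (by rintro a z ⟨u, rfl⟩; exact ⟨u * z, mul_assoc _ _ _⟩) := by
        rw [TwoSidedIdeal.mem_mk']
        rintro ⟨u, hu⟩
        apply hne
        have h3 : e * 1 = e * ((1 - e) * u) := by rw [← hu]
        rw [mul_one, ← mul_assoc, mul_sub, mul_one, he, sub_self, zero_mul] at h3
        exact h3
      obtain ⟨M, hM, hIM⟩ := exists_coatom_ge' _ h1I
      have hle : sInf {M : TwoSidedIdeal R | IsCoatom M} ≤ M := sInf_le hM
      have hxM : x ∈ M := hle hx
      have heM : e ∈ M := by
        rw [her]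
        exact M.mul_mem_right _ _ (M.neg_mem (M.mul_mem_left _ _ hxM))
      have h1e : (1 - e) ∈ M := hIM (by
        rw [TwoSidedIdeal.mem_mk']; exact ⟨1, (mul_one _).symm⟩)
      have h1M : (1 : R) ∈ M := by
        have := M.add_mem heM h1e
        simpa using this
      exact hM.1 (TwoSidedIdeal.eq_top _ h1M)
    rw [he0, sub_zero, sub_neg_eq_add] at hes
    have hvu : s * (1 + y * x) = 1 := abelian_dedekind hab hes.symm
    refine ⟨s, ?_⟩
    rw [TwoSidedIdeal.mem_bot]
    have h2 : s * y * x + s - 1 = s * (1 + y * x) - 1 := by noncomm_ring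
    rw [h2, hvu, sub_self]
  · -- jacobson ⊥ ≤ sInf of coatoms
    refine le_sInf fun M hM => ?_
    have hMj : M ≤ TwoSidedIdeal.jacobson M := by
      intro x hx
      have h1 : x ∈ TwoSidedIdeal.asIdeal (TwoSidedIdeal.jacobson M) := by
        rw [TwoSidedIdeal.asIdeal_jacobson]
        exact Ideal.le_jacobson (TwoSidedIdeal.mem_asIdeal.2 hx)
      exact TwoSidedIdeal.mem_asIdeal.1 h1
    have hne : TwoSidedIdeal.jacobson M ≠ ⊤ := by
      intro h
      have h1 : (1 : R) ∈ TwoSidedIdeal.jacobson M := h ▸ trivial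
      have h2 : (1 : R) ∈ Ideal.jacobson (TwoSidedIdeal.asIdeal M) := by
        rw [← TwoSidedIdeal.asIdeal_jacobson]
        exact TwoSidedIdeal.mem_asIdeal.2 h1
      have htop : Ideal.jacobson (TwoSidedIdeal.asIdeal M) = ⊤ :=
        (Ideal.eq_top_iff_one _).2 h2
      have h3 := Ideal.jacobson_eq_top_iff.1 htop
      have h1M : (1 : R) ∈ M :=
        TwoSidedIdeal.mem_asIdeal.1 (h3 ▸ Submodule.mem_top)
      exact hM.1 (TwoSidedIdeal.eq_top _ h1M)
    have heq : TwoSidedIdeal.jacobson M = M := by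
      rcases hMj.lt_or_eq with h | h
      · exact absurd (hM.2 _ h) hne
      · exact h.symm
    intro x hx
    rw [← heq]
    have h1 : x ∈ TwoSidedIdeal.asIdeal (TwoSidedIdeal.jacobson M) := by
      rw [TwoSidedIdeal.asIdeal_jacobson]
      refine Ideal.jacobson_mono (I := TwoSidedIdeal.asIdeal (⊥ : TwoSidedIdeal R))
        (fun y hy => ?_) ?_
      · have hy0 : y = 0 := (TwoSidedIdeal.mem_bot R).1 (TwoSidedIdeal.mem_asIdeal.1 hy)
        rw [hy0]
        exact (TwoSidedIdeal.asIdeal M).zero_mem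
      · rw [← TwoSidedIdeal.asIdeal_jacobson]
        exact TwoSidedIdeal.mem_asIdeal.2 hx
    exact TwoSidedIdeal.mem_asIdeal.1 h1
end

section
/- Let R be a commutative ring. If for every a ∈ R the element a - a² is nilpotent, then R/J(R) is Boolean and J(R) is a nil ideal. -/
/-- A ring is Boolean if every element is idempotent. -/
def IsBooleanRing (R : Type*) [Ring R] : Prop := ∀ a : R, a * a = a

theorem stmt9 (R : Type*) [CommRing R]
    (h : ∀ a : R, IsNilpotent (a - a ^ 2)) :
    IsBooleanRing (R ⧸ Ideal.jacobson (⊥ : Ideal R)) ∧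
      ∀ a ∈ Ideal.jacobson (⊥ : Ideal R), IsNilpotent a := by
  constructor
  · intro x
    obtain ⟨a, rfl⟩ := Ideal.Quotient.mk_surjective x
    rw [← map_mul, Ideal.Quotient.eq]
    refine Ideal.radical_le_jacobson ?_
    have : IsNilpotent (a * a - a) := by
      have e : a * a - a = -(a - a ^ 2) := by ring
      rw [e]
      exact (h a).neg
    exact mem_nilradical.mpr this
  · intro a ha
    obtain ⟨n, hn⟩ := h a
    have hu : IsUnit (1 - a) := by
      have := (Ideal.mem_jacobson_bot).mp ha (-1)
      simpa [mul_neg, ← sub_eq_add_neg, sub_eq_neg_add] using this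
    refine ⟨n, ?_⟩
    have h2 : (a * (1 - a)) ^ n = 0 := by
      have e : a - a ^ 2 = a * (1 - a) := by ring
      rwa [e] at hn
    rw [mul_pow] at h2
    exact (IsUnit.mul_left_eq_zero (hu.pow n)).mp h2
end

section
/- If R is a ring such that R/J(R) ≅ ℤ/2ℤ and J(R) is nil, then R is nil-clean. -/
theorem stmt16 (R : Type*) [Ring R]
    (hq : Nonempty ((TwoSidedIdeal.jacobson (⊥ : TwoSidedIdeal R)).ringCon.Quotient ≃+* ZMod 2))
    (hnil : ∀ a ∈ TwoSidedIdeal.jacobson (⊥ : TwoSidedIdeal R), IsNilpotent a) :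
    IsNilCleanRing R := by
  obtain ⟨f⟩ := hq
  set J := TwoSidedIdeal.jacobson (⊥ : TwoSidedIdeal R) with hJ
  intro a
  set c := J.ringCon with hc
  have key : ∀ b : R, f ((b : R) : c.Quotient) = 0 → b ∈ J := by
    intro b hb
    have : ((b : R) : c.Quotient) = ((0 : R) : c.Quotient) := by
      apply f.injective; simpa using hb
    have := c.eq.mp this
    exact (J.mem_iff b).mpr this
  rcases (by decide : ∀ z : ZMod 2, z = 0 ∨ z = 1) (f ((a : R) : c.Quotient)) with h | h
  · exact ⟨0, a, by simp [IsIdempotentElem], hnil a (key a h), by abel⟩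
  · refine ⟨1, a - 1, by simp [IsIdempotentElem], hnil _ (key (a - 1) ?_), by abel⟩
    have : ((a - 1 : R) : c.Quotient) = ((a : R) : c.Quotient) - 1 := by
      push_cast; ring
    rw [this, map_sub, h, map_one, sub_self]
end

section
/- Every nil-clean ring is an exchange ring. -/
/-- In a nil-clean ring, 2 is nilpotent. -/
lemma two_nilpotent_of_nilClean (R : Type*) [Ring R] (h : IsNilCleanRing R) :
    IsNilpotent (2 : R) := by
  obtain ⟨e, q, he, hq, hsum⟩ := h (-1)
  have heq : e = -(1 + q) := by
    have h1 : e = -1 - q := eq_sub_of_add_eq hsum.symm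
    rw [h1]; noncomm_ring
  have heu : IsUnit e := by
    rw [heq]
    exact (hq.isUnit_one_add).neg
  have he1 : e = 1 := heu.mul_left_cancel (by rw [he.eq, mul_one])
  rw [he1] at hsum
  have hq2 : q = -2 := by
    have h2 : q = -1 - 1 := eq_sub_of_add_eq ((add_comm q 1) ▸ hsum.symm)
    rw [h2]; norm_num
  have hneg : IsNilpotent (-2 : R) := hq2 ▸ hq
  simpa using hneg.neg

theorem stmt18 (R : Type*) [Ring R] (h : IsNilCleanRing R) : IsExchangeRing R := by
  obtain ⟨k, hk⟩ := two_nilpotent_of_nilClean R h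
  intro a
  obtain ⟨e, q, he, hq, hsum⟩ := h a
  obtain ⟨n, hn⟩ := hq
  set x : R := 2 * (e * q) - q with hx
  -- x ^ n lies in 2R
  have key : ∀ m : ℕ, ∃ y : R, x ^ m = (-q) ^ m + 2 * y := by
    intro m
    induction m with
    | zero => exact ⟨0, by simp⟩
    | succ m ih =>
      obtain ⟨y, hy⟩ := ih
      refine ⟨(-q) ^ m * (e * q) + y * x, ?_⟩
      rw [pow_succ, pow_succ, hy, hx]
      generalize (-q) ^ m = A
      noncomm_ring
  -- hence x is nilpotent
  have hxnil : IsNilpotent x := by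
    obtain ⟨y, hy⟩ := key n
    have hqn : (-q : R) ^ n = 0 := by
      rw [neg_pow, hn, mul_zero]
    have hxn : x ^ n = 2 * y := by rw [hy, hqn, zero_add]
    refine ⟨n * k, ?_⟩
    rw [pow_mul, hxn]
    have hc : Commute (2 : R) y := by
      have h1 : Commute (1 : R) y := Commute.one_left y
      simpa [one_add_one_eq_two] using h1.add_left h1
    rw [hc.mul_pow, hk, zero_mul]
  -- u = a - (1 - e) is a unit
  have h2e : (2 * e - 1) * (2 * e - 1) = 1 := by
    apply sub_eq_zero.mp
    have hd : (2 * e - 1) * (2 * e - 1) - 1 = 4 * (e * e - e) := by noncomm_ring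
    rw [hd, he.eq, sub_self, mul_zero]
  set u : R := (2 * e - 1) * (1 + x) with hu
  have huu : IsUnit u := by
    rw [hu]
    exact IsUnit.mul ((⟨2 * e - 1, 2 * e - 1, h2e, h2e⟩ : Rˣ).isUnit) hxnil.isUnit_one_add
  have hueq : u = a - (1 - e) := by
    apply sub_eq_zero.mp
    rw [hu, hx, hsum]
    have hd : (2 * e - 1) * (1 + (2 * (e * q) - q)) - (e + q - (1 - e))
        = 4 * (e * e - e) * q := by noncomm_ring
    rw [hd, he.eq, sub_self, mul_zero, zero_mul]
  obtain ⟨U, hU⟩ := huu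
  set v : R := ↑U⁻¹ with hv
  have huv : u * v = 1 := by rw [hv, ← hU]; exact U.mul_inv
  have hvu : v * u = 1 := by rw [hv, ← hU]; exact U.inv_mul
  refine ⟨u * e * v, e * v, -((1 - e) * v), ?_, ?_, ?_⟩
  · -- idempotent
    show (u * e * v) * (u * e * v) = u * e * v
    have h1 : (u * e * v) * (u * e * v) = u * ((e * (v * u)) * (e * v)) := by noncomm_ring
    rw [h1, hvu, mul_one]
    have h2 : u * (e * (e * v)) = u * ((e * e) * v) := by noncomm_ring
    rw [h2, he.eq, ← mul_assoc]
  · -- u e v = a (e v)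
    have hue : u * e = a * e := by
      apply sub_eq_zero.mp
      rw [hueq]
      have hd : (a - (1 - e)) * e - a * e = e * e - e := by noncomm_ring
      rw [hd, he.eq, sub_self]
    calc u * e * v = a * e * v := by rw [hue]
      _ = a * (e * v) := mul_assoc a e v
  · -- 1 - u e v = (1 - a)(-((1-e) v))
    have ha : a = u + (1 - e) := by rw [hueq]; noncomm_ring
    have hkey : (1 - a) * (1 - e) = -(u * (1 - e)) := by
      apply eq_neg_of_add_eq_zero_left
      rw [ha]
      have hd : (1 - (u + (1 - e))) * (1 - e) + u * (1 - e) = e - e * e := by noncomm_ring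
      rw [hd, he.eq, sub_self]
    have hstep : (1 - a) * -((1 - e) * v) = u * (1 - e) * v := by
      calc (1 - a) * -((1 - e) * v) = -(((1 - a) * (1 - e)) * v) := by noncomm_ring
        _ = -(-(u * (1 - e)) * v) := by rw [hkey]
        _ = u * (1 - e) * v := by noncomm_ring
    rw [hstep]
    have hfin : u * (1 - e) * v = u * v - u * e * v := by noncomm_ring
    rw [hfin, huv]
end
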